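/- Let M be an n×n primitive Boolean matrix with Boolean rank b, 3 ≤ b ≤ n−1, and set h = ⌈((b−1)²+1)/2⌉. Suppose M has a Boolean rank factorization M = AB such that (i) BA = W_b, (ii) some row of A equals the standard basis row e_{⌊b/2⌋}^t and some row of A equals e_b^t, and (iii) no column of B equals e_{b−1} + e_b. Then k(M) = h + 1. -/
import Mathlib


/-- Boolean matrix product over the Boolean semiring, modeled with `Prop` entries. -/
def bmul {l m n : ℕ} (A : Fin l → Fin m → Prop) (B : Fin m → Fin n → Prop) :
    Fin l → Fin n → Prop := fun i j => ∃ k, A i k ∧ B k j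

/-- Transpose of a Boolean matrix. -/
def btrans {m n : ℕ} (A : Fin m → Fin n → Prop) : Fin n → Fin m → Prop := fun i j => A j i

/-- Boolean matrix power. -/
def bpow {n : ℕ} (A : Fin n → Fin n → Prop) : ℕ → (Fin n → Fin n → Prop)
  | 0 => fun i j => i = j
  | k + 1 => bmul A (bpow A k)

/-- The all-ones Boolean matrix `J`. -/
def bJ {m n : ℕ} : Fin m → Fin n → Prop := fun _ _ => True

/-- A square Boolean matrix is primitive if some positive power is the all-ones matrix. -/
def IsPrimitive {n : ℕ} (A : Fin n → Fin n → Prop) : Prop :=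
  ∃ r, 1 ≤ r ∧ bpow A r = bJ

/-- The scrambling index: least `k ≥ 1` with `A^k (Aᵗ)^k = J`. -/
noncomputable def scram {n : ℕ} (A : Fin n → Fin n → Prop) : ℕ :=
  sInf {k | 1 ≤ k ∧ bmul (bpow A k) (bpow (btrans A) k) = bJ}

/-- The Boolean rank: least `b ≥ 1` admitting a factorization through dimension `b`. -/
noncomputable def brank {n m : ℕ} (M : Fin n → Fin m → Prop) : ℕ :=
  sInf {b | 0 < b ∧ ∃ (A : Fin n → Fin b → Prop) (B : Fin b → Fin m → Prop), M = bmul A B}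

/-- `A` has no zero row. -/
def NoZeroRow {m n : ℕ} (A : Fin m → Fin n → Prop) : Prop := ∀ i, ∃ j, A i j

/-- `A` has no zero column. -/
def NoZeroCol {m n : ℕ} (A : Fin m → Fin n → Prop) : Prop := ∀ j, ∃ i, A i j

/-- The Wielandt matrix `W_b` (0-indexed): arcs `i → i+1`, `b-2 → 0`, `b-1 → 0`. -/
def Wielandt (b : ℕ) : Fin b → Fin b → Prop :=
  fun i j => j.val = i.val + 1 ∨ (i.val = b - 2 ∧ j.val = 0) ∨ (i.val = b - 1 ∧ j.val = 0)

section Alg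

lemma bext {m n : ℕ} {A B : Fin m → Fin n → Prop} (h : ∀ i j, A i j ↔ B i j) : A = B :=
  funext fun i => funext fun j => propext (h i j)

lemma bmul_assoc {k l m n : ℕ} (A : Fin k → Fin l → Prop) (B : Fin l → Fin m → Prop)
    (C : Fin m → Fin n → Prop) : bmul (bmul A B) C = bmul A (bmul B C) := by
  apply bext; intro i j
  constructor
  · rintro ⟨q, ⟨p, hA, hB⟩, hC⟩; exact ⟨p, hA, q, hB, hC⟩
  · rintro ⟨p, hA, q, hB, hC⟩; exact ⟨q, ⟨p, hA, hB⟩, hC⟩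

lemma bmul_idr {m n : ℕ} (A : Fin m → Fin n → Prop) :
    bmul A (fun i j => i = j) = A := by
  apply bext; intro i j
  constructor
  · rintro ⟨k, hA, rfl⟩; exact hA
  · intro h; exact ⟨j, h, rfl⟩

lemma bmul_idl {m n : ℕ} (A : Fin m → Fin n → Prop) :
    bmul (fun i j => (i = j : Prop)) A = A := by
  apply bext; intro i j
  constructor
  · rintro ⟨k, rfl, hA⟩; exact hA
  · intro h; exact ⟨i, rfl, h⟩

lemma bpow_zero {n : ℕ} (A : Fin n → Fin n → Prop) :
    bpow A 0 = fun i j => (i = j : Prop) := rfl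

lemma bpow_succ {n : ℕ} (A : Fin n → Fin n → Prop) (k : ℕ) :
    bpow A (k + 1) = bmul A (bpow A k) := rfl

lemma bpow_succ_right {n : ℕ} (A : Fin n → Fin n → Prop) (k : ℕ) :
    bpow A (k + 1) = bmul (bpow A k) A := by
  induction k with
  | zero => rw [bpow_succ, bpow_zero, bmul_idr, bmul_idl]
  | succ k ih => rw [bpow_succ A (k+1), ih, ← bmul_assoc, ← bpow_succ, ih]

lemma btrans_bmul {l m n : ℕ} (A : Fin l → Fin m → Prop) (B : Fin m → Fin n → Prop) :
    btrans (bmul A B) = bmul (btrans B) (btrans A) := by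
  apply bext; intro i j
  constructor
  · rintro ⟨k, hA, hB⟩; exact ⟨k, hB, hA⟩
  · rintro ⟨k, hB, hA⟩; exact ⟨k, hA, hB⟩

lemma bpow_btrans {n : ℕ} (A : Fin n → Fin n → Prop) (k : ℕ) :
    bpow (btrans A) k = btrans (bpow A k) := by
  induction k with
  | zero =>
    apply bext; intro i j
    constructor
    · rintro rfl; rfl
    · intro h; exact (show (j : Fin n) = i from h).symm
  | succ k ih => rw [bpow_succ, ih, ← btrans_bmul, ← bpow_succ_right]

lemma fact_pow {n b : ℕ} (A : Fin n → Fin b → Prop) (B : Fin b → Fin n → Prop) (k : ℕ) :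
    bpow (bmul A B) (k + 1) = bmul A (bmul (bpow (bmul B A) k) B) := by
  induction k with
  | zero => rw [bpow_succ, bpow_zero, bpow_zero, bmul_idr, bmul_idl]
  | succ k ih =>
    rw [bpow_succ (bmul A B), ih, bpow_succ (bmul B A), bmul_assoc A B,
      ← bmul_assoc B A, bmul_assoc (bmul B A) (bpow (bmul B A) k) B]

end Alg

section Char

/-- `dd b x` : distance from `x` to the shortcut vertex `b-2` in the Wielandt digraph. -/
def dd (b x : ℕ) : ℕ := if x = b - 1 then b - 1 else b - 2 - x

lemma dd_last {b : ℕ} : dd b (b-1) = b-1 := if_pos rfl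

lemma dd_lt {b x : ℕ} (h : x ≠ b-1) : dd b x = b - 2 - x := if_neg h

lemma mod_two_b {b x : ℕ} (h1 : b ≤ x) (h2 : x < 2 * b) : x % b = x - b := by
  rw [Nat.mod_eq_sub_mod h1, Nat.mod_eq_of_lt (by omega)]

lemma prodshift (t c : ℕ) (h : 1 ≤ t) : t * c = (t - 1) * c + c := by
  cases t with
  | zero => omega
  | succ s => simp [Nat.succ_sub_one, Nat.succ_mul]

lemma wchar {b : ℕ} (hb : 3 ≤ b) : ∀ (m : ℕ) (u v : Fin b),
    bpow (Wielandt b) m u v ↔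
      ∃ t, (u.val + m + t) % b = v.val ∧
        (t = 0 ∨ dd b u.val + 1 + (t - 1) * (b - 1) ≤ m) := by
  intro m
  induction m with
  | zero =>
    intro u v
    constructor
    · intro h
      have h' : u = v := h
      subst h'
      refine ⟨0, ?_, Or.inl rfl⟩
      have e : u.val + 0 + 0 = u.val := rfl
      rw [e, Nat.mod_eq_of_lt u.isLt]
    · rintro ⟨t, hres, ht⟩
      rcases ht with rfl | hle
      · have e : u.val + 0 + 0 = u.val := rfl
        rw [e, Nat.mod_eq_of_lt u.isLt] at hres
        exact Fin.ext hres
      · omega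
  | succ m ih =>
    intro u v
    have hstep : bpow (Wielandt b) (m+1) u v ↔
        ∃ w : Fin b, Wielandt b u w ∧ bpow (Wielandt b) m w v := Iff.rfl
    rw [hstep]
    constructor
    · rintro ⟨w, hw, hwv⟩
      rw [ih w v] at hwv
      obtain ⟨t, hres, hcond⟩ := hwv
      rcases hw with h1 | ⟨h2a, h2b⟩ | ⟨h3a, h3b⟩
      · -- w.val = u.val + 1 ; no shortcut used at this step
        have hub : u.val + 1 < b := h1 ▸ w.isLt
        refine ⟨t, ?_, ?_⟩
        · have e : u.val + (m+1) + t = w.val + m + t := by omega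
          rw [e]; exact hres
        · rcases hcond with rfl | hle
          · exact Or.inl rfl
          · right
            rw [h1] at hle
            rw [dd_lt (by omega : u.val ≠ b - 1)]
            by_cases hw1 : u.val + 1 = b - 1
            · rw [hw1, dd_last] at hle
              generalize (t - 1) * (b - 1) = X at hle ⊢; omega
            · rw [dd_lt hw1] at hle
              generalize (t - 1) * (b - 1) = X at hle ⊢; omega
      · -- u.val = b-2, w.val = 0 : shortcut used; t ↦ t+1
        refine ⟨t + 1, ?_, ?_⟩
        · have e : u.val + (m+1) + (t+1) = b + (m + t) := by omega
          rw [e, Nat.add_mod_left]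
          rw [show w.val + m + t = m + t by omega] at hres
          exact hres
        · right
          rw [h2a, dd_lt (by omega : b - 2 ≠ b - 1),
            show b - 2 - (b - 2) = 0 by omega, show t + 1 - 1 = t by omega]
          rcases Nat.eq_zero_or_pos t with rfl | htpos
          · simp
          · rw [prodshift t (b-1) htpos]
            rcases hcond with h' | hle
            · omega
            · rw [h2b, dd_lt (by omega : (0:ℕ) ≠ b - 1)] at hle
              generalize (t - 1) * (b - 1) = X at hle ⊢; omega
      · -- u.val = b-1, w.val = 0 : wrap around, no shortcut
        refine ⟨t, ?_, ?_⟩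
        · have e : u.val + (m+1) + t = b + (m + t) := by omega
          rw [e, Nat.add_mod_left]
          rw [show w.val + m + t = m + t by omega] at hres
          exact hres
        · rcases hcond with rfl | hle
          · exact Or.inl rfl
          · right
            rw [h3b, dd_lt (by omega : (0:ℕ) ≠ b - 1)] at hle
            rw [h3a, dd_last]
            generalize (t - 1) * (b - 1) = X at hle ⊢; omega
    · rintro ⟨t, hres, hcond⟩
      rcases Nat.lt_trichotomy (u.val) (b - 2) with hu | hu | hu
      · -- u.val < b - 2 : step to u+1
        refine ⟨⟨u.val + 1, by omega⟩, Or.inl rfl, ?_⟩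
        rw [ih]
        refine ⟨t, ?_, ?_⟩
        · show (u.val + 1 + m + t) % b = v.val
          rw [show u.val + 1 + m + t = u.val + (m+1) + t by omega]
          exact hres
        · rcases hcond with rfl | hle
          · exact Or.inl rfl
          · right
            show dd b (u.val + 1) + 1 + (t - 1) * (b - 1) ≤ m
            rw [dd_lt (by omega : u.val + 1 ≠ b - 1)]
            rw [dd_lt (by omega : u.val ≠ b - 1)] at hle
            generalize (t - 1) * (b - 1) = X at hle ⊢; omega
      · -- u.val = b - 2
        rcases Nat.eq_zero_or_pos t with rfl | htpos
        · -- t = 0 : step to b-1, no shortcut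
          refine ⟨⟨b - 1, by omega⟩, Or.inl (show b - 1 = u.val + 1 by omega), ?_⟩
          rw [ih]
          refine ⟨0, ?_, Or.inl rfl⟩
          show (b - 1 + m + 0) % b = v.val
          rw [show b - 1 + m + 0 = u.val + (m+1) + 0 by omega]
          exact hres
        · -- t ≥ 1 : take the shortcut to 0
          refine ⟨⟨0, by omega⟩, Or.inr (Or.inl ⟨hu, rfl⟩), ?_⟩
          rw [ih]
          refine ⟨t - 1, ?_, ?_⟩
          · show (0 + m + (t - 1)) % b = v.val
            rw [show u.val + (m+1) + t = b + (m + (t-1)) by omega,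
              Nat.add_mod_left] at hres
            rw [show 0 + m + (t-1) = m + (t-1) by omega]
            exact hres
          · rcases Nat.eq_zero_or_pos (t - 1) with h1 | h1
            · exact Or.inl h1
            · right
              show dd b 0 + 1 + (t - 1 - 1) * (b - 1) ≤ m
              rw [dd_lt (by omega : (0:ℕ) ≠ b - 1)]
              rcases hcond with h' | hle
              · omega
              · rw [dd_lt (by omega : u.val ≠ b - 1),
                  show b - 2 - u.val = 0 by omega] at hle
                have e3 : (t - 1) * (b-1) = (t - 1 - 1) * (b-1) + (b-1) :=
                  prodshift _ _ h1
                generalize (t - 1 - 1) * (b - 1) = X at e3 ⊢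
                generalize (t - 1) * (b - 1) = Y at e3 hle
                omega
      · -- u.val = b - 1
        have hu' : u.val = b - 1 := by omega
        refine ⟨⟨0, by omega⟩, Or.inr (Or.inr ⟨hu', rfl⟩), ?_⟩
        rw [ih]
        refine ⟨t, ?_, ?_⟩
        · show (0 + m + t) % b = v.val
          rw [show u.val + (m+1) + t = b + (m + t) by omega,
            Nat.add_mod_left] at hres
          rw [show 0 + m + t = m + t by omega]
          exact hres
        · rcases hcond with rfl | hle
          · exact Or.inl rfl
          · right
            show dd b 0 + 1 + (t - 1) * (b - 1) ≤ m
            rw [dd_lt (by omega : (0:ℕ) ≠ b - 1)]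
            rw [hu', dd_last] at hle
            generalize (t - 1) * (b - 1) = X at hle ⊢; omega

end Char

section Comb

lemma tle {t B bm1 D m : ℕ} (hcond : t = 0 ∨ D + 1 + (t - 1) * bm1 ≤ m)
    (hbig : m < D + 1 + B * bm1) : t ≤ B := by
  by_contra hq
  rcases hcond with rfl | hle
  · omega
  have h2 : B * bm1 ≤ (t - 1) * bm1 := Nat.mul_le_mul_right _ (by omega)
  generalize (t - 1) * bm1 = X at hle h2
  generalize B * bm1 = Y at h2 hbig
  omega

lemma feas_le {b h D B t : ℕ} (ht : t ≤ B) (hB1 : 1 ≤ B)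
    (hfe : D + 1 + (B - 1) * (b - 1) ≤ h) :
    t = 0 ∨ D + 1 + (t - 1) * (b - 1) ≤ h := by
  rcases Nat.eq_zero_or_pos t with rfl | hp
  · exact Or.inl rfl
  · right
    have h2 : (t - 1) * (b - 1) ≤ (B - 1) * (b - 1) :=
      Nat.mul_le_mul_right _ (by omega)
    generalize (t - 1) * (b - 1) = X at h2 ⊢
    generalize (B - 1) * (b - 1) = Y at h2 hfe
    omega

lemma Ldisj {b : ℕ} (hb : 3 ≤ b) (m : ℕ) (hm : m + 1 = ((b - 1) ^ 2 + 2) / 2)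
    (s r v : Fin b) (hs : s.val = b / 2 - 1) (hr : r.val = b - 1) :
    ¬ (bpow (Wielandt b) m s v ∧ bpow (Wielandt b) m r v) := by
  rintro ⟨h1, h2⟩
  rw [wchar hb] at h1 h2
  obtain ⟨t1, hres1, hcond1⟩ := h1
  obtain ⟨t2, hres2, hcond2⟩ := h2
  have hds : dd b s.val = b - 2 - s.val := dd_lt (by omega)
  have hdr : dd b r.val = b - 1 := by rw [hr, dd_last]
  rw [hds] at hcond1
  rw [hdr] at hcond2
  rcases Nat.even_or_odd b with ⟨c, hc⟩ | ⟨c, hc⟩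
  · -- even : b = 2a+2, a ≥ 1
    obtain ⟨a, ha, ha1⟩ : ∃ a, b = 2 * a + 2 ∧ 1 ≤ a := ⟨c - 1, by omega, by omega⟩
    have hsq : (b - 1) ^ 2 = 4 * (a * a) + 4 * a + 1 := by
      rw [show b - 1 = 2 * a + 1 by omega]; ring
    have hmv : m = 2 * (a * a) + 2 * a := by
      generalize hK : a * a = K at hsq
      generalize hP : (b - 1) ^ 2 = P at hsq hm
      omega
    have hsv : s.val = a := by omega
    have hrv : r.val = 2 * a + 1 := by omega
    -- bounds on t1 t2
    have hb1 : t1 ≤ a := by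
      refine tle hcond1 ?_
      have e : a * (b - 1) = 2 * (a * a) + a := by
        rw [show b - 1 = 2 * a + 1 by omega]; ring
      generalize a * (b - 1) = Y at e ⊢
      generalize a * a = K at e hmv
      omega
    have hb2 : t2 ≤ a := by
      refine tle hcond2 ?_
      have e : a * (b - 1) = 2 * (a * a) + a := by
        rw [show b - 1 = 2 * a + 1 by omega]; ring
      generalize a * (b - 1) = Y at e ⊢
      generalize a * a = K at e hmv
      omega
    -- residues
    have hcame : (s.val + t1) % b = (r.val + t2) % b := by
      have e1 : s.val + m + t1 = s.val + t1 + m := by ring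
      have e2 : r.val + m + t2 = r.val + t2 + m := by ring
      rw [e1] at hres1; rw [e2] at hres2
      exact Nat.ModEq.add_right_cancel' m (hres1.trans hres2.symm)
    have hx1 : (s.val + t1) % b = s.val + t1 := Nat.mod_eq_of_lt (by omega)
    rcases Nat.eq_zero_or_pos t2 with rfl | hp2
    · rw [Nat.mod_eq_of_lt (by omega : r.val + 0 < b)] at hcame
      omega
    · rw [mod_two_b (b := b) (x := r.val + t2) (by omega) (by omega)] at hcame
      omega
  · -- odd : b = 2a+3, a ≥ 0
    obtain ⟨a, ha⟩ : ∃ a, b = 2 * a + 3 := ⟨c - 1, by omega⟩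
    have hsq : (b - 1) ^ 2 = 4 * (a * a) + 8 * a + 4 := by
      rw [show b - 1 = 2 * a + 2 by omega]; ring
    have hmv : m = 2 * (a * a) + 4 * a + 2 := by
      generalize hK : a * a = K at hsq
      generalize hP : (b - 1) ^ 2 = P at hsq hm
      omega
    have hsv : s.val = a := by omega
    have hrv : r.val = 2 * a + 2 := by omega
    have hb1 : t1 ≤ a + 1 := by
      refine tle hcond1 ?_
      have e : (a + 1) * (b - 1) = 2 * (a * a) + 4 * a + 2 := by
        rw [show b - 1 = 2 * a + 2 by omega]; ring
      generalize (a + 1) * (b - 1) = Y at e ⊢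
      generalize a * a = K at e hmv
      omega
    have hb2 : t2 ≤ a := by
      refine tle hcond2 ?_
      have e : a * (b - 1) = 2 * (a * a) + 2 * a := by
        rw [show b - 1 = 2 * a + 2 by omega]; ring
      generalize a * (b - 1) = Y at e ⊢
      generalize a * a = K at e hmv
      omega
    have hcame : (s.val + t1) % b = (r.val + t2) % b := by
      have e1 : s.val + m + t1 = s.val + t1 + m := by ring
      have e2 : r.val + m + t2 = r.val + t2 + m := by ring
      rw [e1] at hres1; rw [e2] at hres2
      exact Nat.ModEq.add_right_cancel' m (hres1.trans hres2.symm)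
    have hx1 : (s.val + t1) % b = s.val + t1 := Nat.mod_eq_of_lt (by omega)
    rcases Nat.eq_zero_or_pos t2 with rfl | hp2
    · rw [Nat.mod_eq_of_lt (by omega : r.val + 0 < b)] at hcame
      omega
    · rw [mod_two_b (b := b) (x := r.val + t2) (by omega) (by omega)] at hcame
      omega

lemma dd_le {b x : ℕ} (hb : 3 ≤ b) : dd b x ≤ b - 1 := by
  unfold dd; split <;> omega

lemma Upair {b : ℕ} (hb : 3 ≤ b) (h : ℕ) (hh : h = ((b - 1) ^ 2 + 2) / 2)
    (u u' : Fin b) (hle : u.val ≤ u'.val) :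
    ∃ v, bpow (Wielandt b) h u v ∧ bpow (Wielandt b) h u' v := by
  suffices hs : ∃ t t', (t = 0 ∨ dd b u.val + 1 + (t - 1) * (b - 1) ≤ h) ∧
      (t' = 0 ∨ dd b u'.val + 1 + (t' - 1) * (b - 1) ≤ h) ∧
      (u.val + t) % b = (u'.val + t') % b by
    obtain ⟨t, t', hf, hf', hee⟩ := hs
    refine ⟨⟨(u.val + h + t) % b, Nat.mod_lt _ (by omega)⟩, ?_, ?_⟩
    · rw [wchar hb]; exact ⟨t, rfl, hf⟩
    · rw [wchar hb]
      refine ⟨t', ?_, hf'⟩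
      show (u'.val + h + t') % b = (u.val + h + t) % b
      rw [show u'.val + h + t' = u'.val + t' + h by ring,
        show u.val + h + t = u.val + t + h by ring]
      exact Nat.ModEq.add_right h hee.symm
  rcases Nat.even_or_odd b with ⟨c, hc⟩ | ⟨c, hc⟩
  · -- even : b = 2a+2, a ≥ 1, h = 2(a*a)+2a+1
    obtain ⟨a, ha, ha1⟩ : ∃ a, b = 2 * a + 2 ∧ 1 ≤ a := ⟨c - 1, by omega, by omega⟩
    have hsq : (b - 1) ^ 2 = 4 * (a * a) + 4 * a + 1 := by
      rw [show b - 1 = 2 * a + 1 by omega]; ring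
    have hhv : h = 2 * (a * a) + 2 * a + 1 := by
      generalize hK : a * a = K at hsq
      generalize hP : (b - 1) ^ 2 = P at hsq hh
      omega
    have hfeas_a : ∀ (w : Fin b) (t : ℕ), t ≤ a →
        (t = 0 ∨ dd b w.val + 1 + (t - 1) * (b - 1) ≤ h) := by
      intro w t ht
      refine feas_le ht ha1 ?_
      have hD := dd_le (x := w.val) hb
      have e : a * (b - 1) = (a - 1) * (b - 1) + (b - 1) := prodshift _ _ ha1
      have e2 : a * (b - 1) = 2 * (a * a) + a := by
        rw [show b - 1 = 2 * a + 1 by omega]; ring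
      generalize (a - 1) * (b - 1) = Y at e ⊢
      generalize a * (b - 1) = Z at e e2
      generalize a * a = K at e2 hhv
      omega
    have hfeas_a1 : ∀ (w : Fin b) (t : ℕ), t ≤ a + 1 → a ≤ w.val → w.val ≤ 2 * a →
        (t = 0 ∨ dd b w.val + 1 + (t - 1) * (b - 1) ≤ h) := by
      intro w t ht hw1 hw2
      refine feas_le ht (by omega) ?_
      have hD : dd b w.val = b - 2 - w.val := dd_lt (by omega)
      have e2 : (a + 1 - 1) * (b - 1) = 2 * (a * a) + a := by
        rw [show a + 1 - 1 = a by omega, show b - 1 = 2 * a + 1 by omega]; ring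
      generalize (a + 1 - 1) * (b - 1) = Y at e2 ⊢
      generalize a * a = K at e2 hhv
      omega
    set δ := u'.val - u.val with hδ
    by_cases hδ1 : δ ≤ a
    · refine ⟨δ, 0, hfeas_a u δ hδ1, Or.inl rfl, ?_⟩
      rw [show u.val + δ = u'.val + 0 by omega]
    · by_cases hδ2 : a + 2 ≤ δ
      · refine ⟨0, b - δ, Or.inl rfl, hfeas_a u' _ (by omega), ?_⟩
        rw [show u'.val + (b - δ) = u.val + 0 + b by omega, Nat.add_mod_right]
      · -- δ = a + 1
        have hδ3 : δ = a + 1 := by omega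
        by_cases hua : a ≤ u.val
        · have hu2 : u.val ≤ 2 * a := by omega
          refine ⟨δ, 0, hfeas_a1 u δ (by omega) hua hu2, Or.inl rfl, ?_⟩
          rw [show u.val + δ = u'.val + 0 by omega]
        · have hu1 : a ≤ u'.val := by omega
          have hu2 : u'.val ≤ 2 * a := by omega
          refine ⟨0, b - δ, Or.inl rfl, hfeas_a1 u' _ (by omega) hu1 hu2, ?_⟩
          rw [show u'.val + (b - δ) = u.val + 0 + b by omega, Nat.add_mod_right]
  · -- odd : b = 2a+3, h = 2(a*a)+4a+3 ; all t ≤ a+1 feasible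
    obtain ⟨a, ha⟩ : ∃ a, b = 2 * a + 3 := ⟨c - 1, by omega⟩
    have hsq : (b - 1) ^ 2 = 4 * (a * a) + 8 * a + 4 := by
      rw [show b - 1 = 2 * a + 2 by omega]; ring
    have hhv : h = 2 * (a * a) + 4 * a + 3 := by
      generalize hK : a * a = K at hsq
      generalize hP : (b - 1) ^ 2 = P at hsq hh
      omega
    have hfeas : ∀ (w : Fin b) (t : ℕ), t ≤ a + 1 →
        (t = 0 ∨ dd b w.val + 1 + (t - 1) * (b - 1) ≤ h) := by
      intro w t ht
      refine feas_le ht (by omega) ?_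
      have hD := dd_le (x := w.val) hb
      have e2 : (a + 1 - 1) * (b - 1) = 2 * (a * a) + 2 * a := by
        rw [show a + 1 - 1 = a by omega, show b - 1 = 2 * a + 2 by omega]; ring
      generalize (a + 1 - 1) * (b - 1) = Y at e2 ⊢
      generalize a * a = K at e2 hhv
      omega
    set δ := u'.val - u.val with hδ
    by_cases hδ1 : δ ≤ a + 1
    · refine ⟨δ, 0, hfeas u δ hδ1, Or.inl rfl, ?_⟩
      rw [show u.val + δ = u'.val + 0 by omega]
    · refine ⟨0, b - δ, Or.inl rfl, hfeas u' _ (by omega), ?_⟩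
      rw [show u'.val + (b - δ) = u.val + 0 + b by omega, Nat.add_mod_right]

lemma Uall {b : ℕ} (hb : 3 ≤ b) (h : ℕ) (hh : h = ((b - 1) ^ 2 + 2) / 2)
    (u u' : Fin b) :
    ∃ v, bpow (Wielandt b) h u v ∧ bpow (Wielandt b) h u' v := by
  rcases le_total u.val u'.val with hle | hle
  · exact Upair hb h hh u u' hle
  · obtain ⟨v, h1, h2⟩ := Upair hb h hh u' u hle
    exact ⟨v, h2, h1⟩

end Comb

section Main

lemma noZeroRow_of_prim {n : ℕ} {M : Fin n → Fin n → Prop} (hM : IsPrimitive M) :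
    NoZeroRow M := by
  obtain ⟨r, hr1, hrJ⟩ := hM
  intro i
  by_contra hno
  push_neg at hno
  obtain ⟨k, rfl⟩ : ∃ k, r = k + 1 := ⟨r - 1, by omega⟩
  have hJ : bpow M (k + 1) i i := by rw [hrJ]; trivial
  obtain ⟨w, hw, -⟩ := hJ
  exact hno w hw

lemma scr_succ {n : ℕ} (M : Fin n → Fin n → Prop) (hrow : NoZeroRow M) (k : ℕ)
    (hk : bmul (bpow M k) (bpow (btrans M) k) = bJ) :
    bmul (bpow M (k + 1)) (bpow (btrans M) (k + 1)) = bJ := by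
  apply bext; intro i j
  refine ⟨fun _ => trivial, fun _ => ?_⟩
  obtain ⟨pi, hpi⟩ := hrow i
  obtain ⟨pj, hpj⟩ := hrow j
  have hJ : bmul (bpow M k) (bpow (btrans M) k) pi pj := by rw [hk]; trivial
  obtain ⟨q, hq1, hq2⟩ := hJ
  refine ⟨q, ⟨pi, hpi, hq1⟩, ?_⟩
  rw [bpow_succ_right]
  exact ⟨pj, hq2, hpj⟩


theorem scram_eq_of_factorization {n b : ℕ} (hb3 : 3 ≤ b) (hbn : b + 1 ≤ n)
    (M : Fin n → Fin n → Prop) (hM : IsPrimitive M) (hrank : brank M = b)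
    (A : Fin n → Fin b → Prop) (B : Fin b → Fin n → Prop)
    (hfact : M = bmul A B)
    (hBA : bmul B A = Wielandt b)
    (hrow1 : ∃ i, ∀ j : Fin b, A i j ↔ j.val = b / 2 - 1)
    (hrow2 : ∃ i, ∀ j : Fin b, A i j ↔ j.val = b - 1)
    (hcol : ¬ ∃ j, ∀ i : Fin b, B i j ↔ (i.val = b - 2 ∨ i.val = b - 1)) :
    scram M = ((b - 1) ^ 2 + 2) / 2 + 1 := by
  obtain ⟨h, hh⟩ : ∃ h, ((b - 1) ^ 2 + 2) / 2 = h := ⟨_, rfl⟩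
  rw [hh]
  have hh1 : 1 ≤ h := by
    rw [← hh]
    exact (Nat.one_le_div_iff (by norm_num)).mpr (by omega)
  have hMrow : NoZeroRow M := noZeroRow_of_prim hM
  have hArow : NoZeroRow A := by
    intro i
    by_contra hno
    push_neg at hno
    obtain ⟨p, hp⟩ := hMrow i
    rw [hfact] at hp
    obtain ⟨q, hq, -⟩ := hp
    exact hno q hq
  have hBrow : NoZeroRow B := by
    intro v
    have hW : ∃ q : Fin b, Wielandt b v q := by
      by_cases h1 : v.val = b - 1
      · exact ⟨⟨0, by omega⟩, Or.inr (Or.inr ⟨h1, rfl⟩)⟩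
      · by_cases h2 : v.val = b - 2
        · exact ⟨⟨0, by omega⟩, Or.inr (Or.inl ⟨h2, rfl⟩)⟩
        · exact ⟨⟨v.val + 1, by omega⟩, Or.inl rfl⟩
    obtain ⟨q, hq⟩ := hW
    rw [← hBA] at hq
    obtain ⟨p, hp, -⟩ := hq
    exact ⟨p, hp⟩
  -- every column of B has at most one nonzero entry
  have hcolsub : ∀ (p : Fin n) (v w : Fin b), B v p → B w p → v = w := by
    intro p v w hv hw
    obtain ⟨q, hq⟩ := hArow p
    have hWv : Wielandt b v q := by rw [← hBA]; exact ⟨p, hv, hq⟩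
    have hWw : Wielandt b w q := by rw [← hBA]; exact ⟨p, hw, hq⟩
    simp only [Wielandt] at hWv hWw
    have hvw : v.val = w.val ∨
        ((v.val = b - 2 ∧ w.val = b - 1 ∧ q.val = 0) ∨
         (v.val = b - 1 ∧ w.val = b - 2 ∧ q.val = 0)) := by omega
    rcases hvw with h1 | hcase
    · exact Fin.ext h1
    · exfalso
      apply hcol
      refine ⟨p, fun i => ?_⟩
      constructor
      · intro hip
        have hWi : Wielandt b i q := by rw [← hBA]; exact ⟨p, hip, hq⟩
        simp only [Wielandt] at hWi
        omega
      · intro hib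
        rcases hcase with ⟨hv2, hw2, -⟩ | ⟨hv2, hw2, -⟩ <;> rcases hib with h' | h'
        · rw [show i = v from Fin.ext (by omega)]; exact hv
        · rw [show i = w from Fin.ext (by omega)]; exact hw
        · rw [show i = w from Fin.ext (by omega)]; exact hw
        · rw [show i = v from Fin.ext (by omega)]; exact hv
  -- h does not scramble
  have hlower : ¬ (bmul (bpow M h) (bpow (btrans M) h) = bJ) := by
    intro hJ
    obtain ⟨i1, hi1⟩ := hrow1
    obtain ⟨i2, hi2⟩ := hrow2
    have hent : bmul (bpow M h) (bpow (btrans M) h) i1 i2 := by rw [hJ]; trivial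
    obtain ⟨p, hp1, hp2⟩ := hent
    rw [bpow_btrans] at hp2
    have hp2' : bpow M h i2 p := hp2
    obtain ⟨m0, hm0⟩ : ∃ m0, h = m0 + 1 := ⟨h - 1, by omega⟩
    rw [hm0, hfact, fact_pow, hBA] at hp1 hp2'
    obtain ⟨q1, hq1, v1, hv1, hB1⟩ := hp1
    obtain ⟨q2, hq2, v2, hv2, hB2⟩ := hp2'
    have hv : v1 = v2 := hcolsub p v1 v2 hB1 hB2
    subst hv
    have hq1v : q1.val = b / 2 - 1 := (hi1 q1).mp hq1
    have hq2v : q2.val = b - 1 := (hi2 q2).mp hq2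
    exact Ldisj hb3 m0 (by rw [hh]; omega) q1 q2 v1 hq1v hq2v ⟨hv1, hv2⟩
  -- h + 1 scrambles
  have hupper : bmul (bpow M (h + 1)) (bpow (btrans M) (h + 1)) = bJ := by
    apply bext; intro i j
    refine ⟨fun _ => trivial, fun _ => ?_⟩
    obtain ⟨qi, hqi⟩ := hArow i
    obtain ⟨qj, hqj⟩ := hArow j
    obtain ⟨v, hv1, hv2⟩ := Uall hb3 h hh.symm qi qj
    obtain ⟨p, hp⟩ := hBrow v
    refine ⟨p, ?_, ?_⟩
    · rw [hfact, fact_pow, hBA]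
      exact ⟨qi, hqi, v, hv1, hp⟩
    · rw [bpow_btrans]
      show bpow M (h + 1) j p
      rw [hfact, fact_pow, hBA]
      exact ⟨qj, hqj, v, hv2, hp⟩
  -- conclude via sInf
  unfold scram
  set S : Set ℕ := {k | 1 ≤ k ∧ bmul (bpow M k) (bpow (btrans M) k) = bJ} with hS
  have hmem : h + 1 ∈ S := ⟨by omega, hupper⟩
  have hup : ∀ k, k ∈ S → k + 1 ∈ S := by
    rintro k ⟨hk1, hkJ⟩
    exact ⟨by omega, scr_succ M hMrow k hkJ⟩
  apply le_antisymm
  · exact Nat.sInf_le hmem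
  · by_contra hlt
    push_neg at hlt
    have hne : S.Nonempty := ⟨h + 1, hmem⟩
    have hs := Nat.sInf_mem hne
    have hmono : ∀ d, sInf S + d ∈ S := by
      intro d
      induction d with
      | zero => exact hs
      | succ d ih => exact hup _ ih
    have hhS : h ∈ S := by
      have := hmono (h - sInf S)
      rw [show sInf S + (h - sInf S) = h by omega] at this
      exact this
    exact hlower hhS.2
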